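/- arXiv:2004.03171 — 3 statements merged into one kernel-verified Lean document; each statement's English description precedes it below -/
import Mathlib

section
/- There exist functions f, g ∈ T_2 with ‖f‖_2 = ‖g‖_2 = ‖f+g‖_2 = ‖f−g‖_2 = 1; in particular the parallelogram law ‖f+g‖_2² + ‖f−g‖_2² = 2(‖f‖_2² + ‖g‖_2²) fails, so the norm ‖·‖_2 on T_2 is not induced by an inner product (T_2 is not a Hilbert space under ‖·‖_2). Explicitly, one may take f = √(q+1)·χ_{v₁} and g = √(q(q+1))·χ_{v₂} for any vertices v₁, v₂ with |v₁| = 1 and |v₂| = 2, where χ_v denotes the characteristic function of {v}. -/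
/-!
`‖·‖_p` is a supremum over levels, so two functions supported on distinct levels add as in an
`ℓ^∞`-direct sum: `‖f ± g‖_p = max (‖f‖_p, ‖g‖_p)`. Taking for `f` and `g` the indicators of a
vertex of level 1 and of level 2, scaled by `√c_1` and `√c_2`, gives four unit vectors, and
`1 + 1 ≠ 2 (1 + 1)`.
-/

open scoped BigOperators Classical

noncomputable section

/-- `treeC q n` is the number `c_n` of vertices at level `n` of the
`(q+1)`-homogeneous rooted tree: `c_0 = 1` and `c_n = (q+1) q^(n-1)` for `n ≥ 1`. -/
def treeC (q n : ℕ) : ℕ := if n = 0 then 1 else (q + 1) * q ^ (n - 1)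

/-- An abstract `(q+1)`-homogeneous rooted tree, described by its vertex set, root,
level function `|·|` (graph distance to the root), and the level counts:
level `n` contains exactly `c_n = treeC q n` vertices. -/
structure HomTree (q : ℕ) where
  V : Type
  root : V
  level : V → ℕ
  level_eq_zero_iff : ∀ v : V, level v = 0 ↔ v = root
  finiteLevel : ∀ n : ℕ, {v : V | level v = n}.Finite
  card_level : ∀ n : ℕ, (finiteLevel n).toFinset.card = treeC q n

theorem treeC_pos {q : ℕ} (hq : 1 ≤ q) (n : ℕ) : 0 < treeC q n := by
  unfold treeC
  split <;> positivity

namespace HomTree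

variable {q : ℕ} (T : HomTree q)

/-- The set `D_n` of vertices of level `n`, as a finset. -/
def levelFinset (n : ℕ) : Finset T.V := (T.finiteLevel n).toFinset

/-- `M_p(n, f)` for `0 < p < ∞`:
`M_p(n,f) = ((1/c_n) ∑_{|v|=n} |f v|^p)^(1/p)` (which equals `|f o|` for `n = 0`). -/
def Mp (p : ℝ) (n : ℕ) (f : T.V → ℂ) : ℝ :=
  ((1 / (treeC q n : ℝ)) * ∑ v ∈ T.levelFinset n, ‖f v‖ ^ p) ^ (1 / p)

/-- `M_∞(n, f) = max_{|v| = n} |f v|`. -/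
def Minf (n : ℕ) (f : T.V → ℂ) : ℝ :=
  sSup ((fun v => ‖f v‖) '' {v : T.V | T.level v = n})

/-- `f ∈ T_p`, i.e. `‖f‖_p = sup_n M_p(n,f) < ∞`. -/
def memTp (p : ℝ) (f : T.V → ℂ) : Prop := BddAbove (Set.range fun n => T.Mp p n f)

/-- `‖f‖_p = sup_n M_p(n, f)`. -/
def normTp (p : ℝ) (f : T.V → ℂ) : ℝ := ⨆ n, T.Mp p n f

/-- `f ∈ T_∞`. -/
def memTinf (f : T.V → ℂ) : Prop := BddAbove (Set.range fun n => T.Minf n f)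

/-- `‖f‖_∞ = sup_n M_∞(n, f)`. -/
def normTinf (f : T.V → ℂ) : ℝ := ⨆ n, T.Minf n f

/-- `f ∈ T_{p,0}`: `f ∈ T_p` and `M_p(n,f) → 0` as `n → ∞`. -/
def memTp0 (p : ℝ) (f : T.V → ℂ) : Prop :=
  T.memTp p f ∧ Filter.Tendsto (fun n => T.Mp p n f) Filter.atTop (nhds 0)

/-- `f ∈ T_{∞,0}`. -/
def memTinf0 (f : T.V → ℂ) : Prop :=
  T.memTinf f ∧ Filter.Tendsto (fun n => T.Minf n f) Filter.atTop (nhds 0)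

/-- `N_φ(n, w)`: the number of preimages of `w` under `φ` at level `n`. -/
def Nphi (phi : T.V → T.V) (n : ℕ) (w : T.V) : ℕ :=
  ((T.levelFinset n).filter fun v => phi v = w).card

/-- `N_{m,n} = max_{|w| = m} N_φ(n, w)`. -/
def Nmax (phi : T.V → T.V) (m n : ℕ) : ℕ :=
  (T.levelFinset m).sup fun w => T.Nphi phi n w

/-- `C_φ` is a bounded operator on `T_p`: it maps `T_p` into `T_p` and
`‖f ∘ φ‖_p ≤ C ‖f‖_p` for some constant `C`. -/
def BoundedCompTp (p : ℝ) (phi : T.V → T.V) : Prop :=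
  (∀ f : T.V → ℂ, T.memTp p f → T.memTp p (f ∘ phi)) ∧
  ∃ C : ℝ, ∀ f : T.V → ℂ, T.memTp p f → T.normTp p (f ∘ phi) ≤ C * T.normTp p f

/-- The operator norm of `C_φ` on `T_p`: `sup {‖f ∘ φ‖_p : f ∈ T_p, ‖f‖_p = 1}`. -/
def opNormTp (p : ℝ) (phi : T.V → T.V) : ℝ :=
  sSup {x : ℝ | ∃ f : T.V → ℂ, T.memTp p f ∧ T.normTp p f = 1 ∧ x = T.normTp p (f ∘ phi)}

/-- `C_φ` is a bounded operator on `T_{p,0}`. -/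
def BoundedCompTp0 (p : ℝ) (phi : T.V → T.V) : Prop :=
  (∀ f : T.V → ℂ, T.memTp0 p f → T.memTp0 p (f ∘ phi)) ∧
  ∃ C : ℝ, ∀ f : T.V → ℂ, T.memTp0 p f → T.normTp p (f ∘ phi) ≤ C * T.normTp p f

/-- The operator norm of `C_φ` on `T_{p,0}`. -/
def opNormTp0 (p : ℝ) (phi : T.V → T.V) : ℝ :=
  sSup {x : ℝ | ∃ f : T.V → ℂ, T.memTp0 p f ∧ T.normTp p f = 1 ∧ x = T.normTp p (f ∘ phi)}

/-- `C_φ` is a bounded operator on `T_{∞,0}`. -/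
def BoundedCompTinf0 (phi : T.V → T.V) : Prop :=
  (∀ f : T.V → ℂ, T.memTinf0 f → T.memTinf0 (f ∘ phi)) ∧
  ∃ C : ℝ, ∀ f : T.V → ℂ, T.memTinf0 f → T.normTinf (f ∘ phi) ≤ C * T.normTinf f

end HomTree

namespace HomTree

variable {q : ℕ} (T : HomTree q)

theorem mem_levelFinset {v : T.V} {n : ℕ} : v ∈ T.levelFinset n ↔ T.level v = n := by
  simp [levelFinset]

theorem exists_level_eq (hq : 1 ≤ q) (n : ℕ) : ∃ v, T.level v = n := by
  have hpos : 0 < (T.levelFinset n).card := by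
    rw [levelFinset, T.card_level]
    exact treeC_pos hq n
  obtain ⟨v, hv⟩ := Finset.card_pos.mp hpos
  exact ⟨v, T.mem_levelFinset.mp hv⟩

variable {T} {p : ℝ} {n : ℕ} {f g : T.V → ℂ}

theorem Mp_nonneg : 0 ≤ T.Mp p n f :=
  Real.rpow_nonneg (by positivity) _

theorem Mp_congr (h : ∀ v, T.level v = n → ‖f v‖ = ‖g v‖) : T.Mp p n f = T.Mp p n g := by
  unfold Mp
  rw [Finset.sum_congr rfl fun v hv => by rw [h v (T.mem_levelFinset.mp hv)]]

theorem Mp_eq_zero (hp : p ≠ 0) (h : ∀ v, T.level v = n → f v = 0) : T.Mp p n f = 0 := by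
  rw [Mp_congr (g := 0) fun v hv => by rw [h v hv, Pi.zero_apply]]
  simp [Mp, Real.zero_rpow hp, Real.zero_rpow (inv_ne_zero hp)]

theorem Mp_add_eq_left (hg : ∀ v, T.level v = n → g v = 0) : T.Mp p n (f + g) = T.Mp p n f :=
  Mp_congr fun v hv => by simp [hg v hv]

theorem Mp_add_eq_right (hf : ∀ v, T.level v = n → f v = 0) : T.Mp p n (f + g) = T.Mp p n g :=
  Mp_congr fun v hv => by simp [hf v hv]

theorem Mp_neg : T.Mp p n (-f) = T.Mp p n f :=
  Mp_congr fun v _ => norm_neg (f v)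

theorem normTp_eq_of_isGreatest {a : ℝ} (h : IsGreatest (Set.range fun n => T.Mp p n f) a) :
    T.memTp p f ∧ T.normTp p f = a :=
  ⟨h.bddAbove, h.csSup_eq⟩

section Supported

variable {m₁ m₂ : ℕ}

theorem eq_zero_of_support_subset (hf : f.support ⊆ T.level ⁻¹' {m₁}) {v : T.V}
    (hv : T.level v ≠ m₁) : f v = 0 :=
  Function.support_subset_iff'.mp hf v hv

theorem Mp_eq_zero_of_support_subset (hp : p ≠ 0) (hf : f.support ⊆ T.level ⁻¹' {m₁})
    (hn : n ≠ m₁) : T.Mp p n f = 0 :=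
  Mp_eq_zero hp fun _ hv => eq_zero_of_support_subset hf (hv ▸ hn)

theorem Mp_le_of_support_subset (hp : p ≠ 0) (hf : f.support ⊆ T.level ⁻¹' {m₁}) (n : ℕ) :
    T.Mp p n f ≤ T.Mp p m₁ f := by
  rcases eq_or_ne n m₁ with rfl | hn
  · exact le_rfl
  · exact (Mp_eq_zero_of_support_subset hp hf hn).trans_le Mp_nonneg

theorem normTp_of_support_subset (hp : p ≠ 0) (hf : f.support ⊆ T.level ⁻¹' {m₁}) :
    T.memTp p f ∧ T.normTp p f = T.Mp p m₁ f :=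
  normTp_eq_of_isGreatest ⟨⟨m₁, rfl⟩, Set.forall_mem_range.2 (Mp_le_of_support_subset hp hf)⟩

theorem normTp_add_of_support_subset (hp : p ≠ 0) (hf : f.support ⊆ T.level ⁻¹' {m₁})
    (hg : g.support ⊆ T.level ⁻¹' {m₂}) (hm : m₁ ≠ m₂) :
    T.memTp p (f + g) ∧ T.normTp p (f + g) = max (T.Mp p m₁ f) (T.Mp p m₂ g) := by
  have at_m₁ : T.Mp p m₁ (f + g) = T.Mp p m₁ f :=
    Mp_add_eq_left fun _ hv => eq_zero_of_support_subset hg (hv ▸ hm)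
  have at_m₂ : T.Mp p m₂ (f + g) = T.Mp p m₂ g :=
    Mp_add_eq_right fun _ hv => eq_zero_of_support_subset hf (hv ▸ hm.symm)
  refine normTp_eq_of_isGreatest ⟨?_, Set.forall_mem_range.2 fun n => ?_⟩
  · rcases max_choice (T.Mp p m₁ f) (T.Mp p m₂ g) with h | h
    · exact ⟨m₁, by simp only [h, at_m₁]⟩
    · exact ⟨m₂, by simp only [h, at_m₂]⟩
  · rcases eq_or_ne n m₂ with rfl | hn
    · exact at_m₂.trans_le (le_max_right _ _)
    · rw [Mp_add_eq_left fun _ hv => eq_zero_of_support_subset hg (hv ▸ hn)]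
      exact (Mp_le_of_support_subset hp hf n).trans (le_max_left _ _)

theorem normTp_sub_of_support_subset (hp : p ≠ 0) (hf : f.support ⊆ T.level ⁻¹' {m₁})
    (hg : g.support ⊆ T.level ⁻¹' {m₂}) (hm : m₁ ≠ m₂) :
    T.memTp p (f - g) ∧ T.normTp p (f - g) = max (T.Mp p m₁ f) (T.Mp p m₂ g) := by
  rw [sub_eq_add_neg, ← Mp_neg (f := g)]
  exact normTp_add_of_support_subset hp hf (by rwa [Function.support_neg]) hm

end Supported

theorem support_ite_eq_subset {v₀ : T.V} {n : ℕ} (hv₀ : T.level v₀ = n) (a : ℂ) :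
    (fun v => if v = v₀ then a else 0).support ⊆ T.level ⁻¹' {n} := by
  intro v hv
  by_cases h : v = v₀
  · simp [h, hv₀]
  · simp [h] at hv

theorem Mp_two_ite_eq_one (hq : 1 ≤ q) {v₀ : T.V} (hv₀ : T.level v₀ = n) {a : ℝ}
    (ha : a ^ 2 = treeC q n) : T.Mp 2 n (fun v => if v = v₀ then (a : ℂ) else 0) = 1 := by
  have hc : (treeC q n : ℝ) ≠ 0 := by exact_mod_cast (treeC_pos hq n).ne'
  unfold Mp
  rw [Finset.sum_eq_single_of_mem v₀ (T.mem_levelFinset.mpr hv₀) fun v _ hv => by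
    simp [hv, Real.zero_rpow two_ne_zero]]
  simp [ha, hc]

theorem parallelogram_ne_of_support_subset {m₁ m₂ : ℕ} (hf : f.support ⊆ T.level ⁻¹' {m₁})
    (hg : g.support ⊆ T.level ⁻¹' {m₂}) (hm : m₁ ≠ m₂) (hMf : T.Mp 2 m₁ f = 1)
    (hMg : T.Mp 2 m₂ g = 1) :
    T.memTp 2 f ∧ T.memTp 2 g ∧
      T.normTp 2 f = 1 ∧ T.normTp 2 g = 1 ∧
      T.normTp 2 (f + g) = 1 ∧ T.normTp 2 (f - g) = 1 ∧
      T.normTp 2 (f + g) ^ 2 + T.normTp 2 (f - g) ^ 2 ≠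
        2 * (T.normTp 2 f ^ 2 + T.normTp 2 g ^ 2) := by
  obtain ⟨mem_f, norm_f⟩ := normTp_of_support_subset two_ne_zero hf
  obtain ⟨mem_g, norm_g⟩ := normTp_of_support_subset two_ne_zero hg
  have norm_add := (normTp_add_of_support_subset two_ne_zero hf hg hm).2
  have norm_sub := (normTp_sub_of_support_subset two_ne_zero hf hg hm).2
  rw [hMf, hMg, max_self] at norm_add norm_sub
  rw [hMf] at norm_f
  rw [hMg] at norm_g
  refine ⟨mem_f, mem_g, norm_f, norm_g, norm_add, norm_sub, ?_⟩
  norm_num [norm_f, norm_g, norm_add, norm_sub]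

end HomTree

/-- There are `f, g ∈ T_2` with `‖f‖₂ = ‖g‖₂ = ‖f+g‖₂ = ‖f-g‖₂ = 1`, violating the
parallelogram law; explicitly one may take `f = √(q+1)·χ_{v₁}` and `g = √(q(q+1))·χ_{v₂}`
for any vertices with `|v₁| = 1`, `|v₂| = 2`.  Hence `T_2` is not a Hilbert space. -/
theorem T2_not_hilbert (q : ℕ) (hq : 1 ≤ q) (T : HomTree q) :
    (∃ f g : T.V → ℂ, T.memTp 2 f ∧ T.memTp 2 g ∧
      T.normTp 2 f = 1 ∧ T.normTp 2 g = 1 ∧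
      T.normTp 2 (f + g) = 1 ∧ T.normTp 2 (f - g) = 1 ∧
      T.normTp 2 (f + g) ^ 2 + T.normTp 2 (f - g) ^ 2 ≠
        2 * (T.normTp 2 f ^ 2 + T.normTp 2 g ^ 2)) ∧
    (∀ v₁ v₂ : T.V, T.level v₁ = 1 → T.level v₂ = 2 →
      ∀ f g : T.V → ℂ,
        f = (fun v => if v = v₁ then ((Real.sqrt ((q : ℝ) + 1) : ℝ) : ℂ) else 0) →
        g = (fun v => if v = v₂ then ((Real.sqrt ((q : ℝ) * ((q : ℝ) + 1)) : ℝ) : ℂ) else 0) →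
        T.memTp 2 f ∧ T.memTp 2 g ∧
        T.normTp 2 f = 1 ∧ T.normTp 2 g = 1 ∧
        T.normTp 2 (f + g) = 1 ∧ T.normTp 2 (f - g) = 1 ∧
        T.normTp 2 (f + g) ^ 2 + T.normTp 2 (f - g) ^ 2 ≠
          2 * (T.normTp 2 f ^ 2 + T.normTp 2 g ^ 2)) := by
  have key (v₁ v₂ : T.V) (h₁ : T.level v₁ = 1) (h₂ : T.level v₂ = 2) :=
    HomTree.parallelogram_ne_of_support_subset (T.support_ite_eq_subset h₁ _)
      (T.support_ite_eq_subset h₂ _) (by norm_num)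
      (T.Mp_two_ite_eq_one hq h₁ (a := √((q : ℝ) + 1))
        (by rw [Real.sq_sqrt (by positivity)]; simp [treeC]))
      (T.Mp_two_ite_eq_one hq h₂ (a := √((q : ℝ) * ((q : ℝ) + 1)))
        (by rw [Real.sq_sqrt (by positivity)]; simp [treeC]; ring))
  refine ⟨?_, fun v₁ v₂ h₁ h₂ f g hf hg => by subst hf hg; exact key v₁ v₂ h₁ h₂⟩
  obtain ⟨v₁, h₁⟩ := T.exists_level_eq hq 1
  obtain ⟨v₂, h₂⟩ := T.exists_level_eq hq 2
  exact ⟨_, _, key v₁ v₂ h₁ h₂⟩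
end
end

section
/- Let φ be a self-map of the (q+1)-homogeneous rooted tree T, q ≥ 1. Then C_φ is a bounded operator on T_{∞,0} (equivalently, C_φ maps T_{∞,0} into T_{∞,0}) if and only if |φ(v)| → ∞ as |v| → ∞. -/
/-!
`M_∞(n, f) → 0` says exactly that `‖f v‖ → 0` as `|v| → ∞`, and the growth condition on `φ` says
that `φ` maps the filter "`|v| → ∞`" into itself, so the backward direction is composition of
limits (boundedness, with constant `1`, is clear for a sup-norm). Conversely, the indicator of the
ball `{|v| < A}` lies in `T_{∞,0}`; its composite with `φ` tends to `0` only if eventually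
`|φ v| ≥ A`.
-/

open scoped BigOperators Classical

noncomputable section

open Filter Topology

namespace HomTree

variable {q : ℕ} (T : HomTree q)

theorem norm_le_Minf (f : T.V → ℂ) (v : T.V) : ‖f v‖ ≤ T.Minf (T.level v) f :=
  le_csSup ((T.finiteLevel _).image _).bddAbove ⟨v, rfl, rfl⟩

theorem Minf_le {f : T.V → ℂ} {n : ℕ} {a : ℝ} (ha : 0 ≤ a)
    (h : ∀ v : T.V, T.level v = n → ‖f v‖ ≤ a) : T.Minf n f ≤ a :=
  Real.sSup_le (by rintro x ⟨v, hv, rfl⟩; exact h v hv) ha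

theorem Minf_nonneg (f : T.V → ℂ) (n : ℕ) : 0 ≤ T.Minf n f :=
  Real.sSup_nonneg (by rintro x ⟨v, _, rfl⟩; exact norm_nonneg _)

theorem tendsto_Minf_zero_iff (f : T.V → ℂ) :
    Tendsto (fun n => T.Minf n f) atTop (𝓝 0) ↔
      Tendsto (fun v => ‖f v‖) (comap T.level atTop) (𝓝 0) := by
  constructor
  · intro h
    exact squeeze_zero (fun _ => norm_nonneg _) (T.norm_le_Minf f) (h.comp tendsto_comap)
  · intro h
    rw [Metric.nhds_basis_closedBall.tendsto_right_iff] at h ⊢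
    intro ε hε
    obtain ⟨N, hN⟩ := eventually_atTop.1 (eventually_comap.1 (h ε hε))
    filter_upwards [eventually_ge_atTop N] with n hn
    have hle : T.Minf n f ≤ ε := T.Minf_le hε.le fun v hv => by
      simpa using hN n hn v hv
    simpa [abs_of_nonneg (T.Minf_nonneg f n)] using hle

theorem tendsto_comap_level_iff (phi : T.V → T.V) :
    Tendsto phi (comap T.level atTop) (comap T.level atTop) ↔
      ∀ A : ℕ, ∃ N : ℕ, ∀ v : T.V, N ≤ T.level v → A ≤ T.level (phi v) := by
  simp [tendsto_comap_iff, (atTop_basis.comap T.level).tendsto_iff atTop_basis]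

theorem normTinf_nonneg {f : T.V → ℂ} (hf : T.memTinf f) : 0 ≤ T.normTinf f :=
  (T.Minf_nonneg f 0).trans (le_ciSup hf 0)

theorem Minf_comp_le_normTinf (phi : T.V → T.V) {f : T.V → ℂ} (hf : T.memTinf f) (n : ℕ) :
    T.Minf n (f ∘ phi) ≤ T.normTinf f :=
  T.Minf_le (T.normTinf_nonneg hf) fun v _ =>
    (T.norm_le_Minf f (phi v)).trans (le_ciSup hf _)

theorem memTinf0_comp {phi : T.V → T.V}
    (hphi : Tendsto phi (comap T.level atTop) (comap T.level atTop))
    {f : T.V → ℂ} (hf : T.memTinf0 f) : T.memTinf0 (f ∘ phi) :=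
  ⟨⟨T.normTinf f, by rintro x ⟨n, rfl⟩; exact T.Minf_comp_le_normTinf phi hf.1 n⟩,
    (T.tendsto_Minf_zero_iff _).2 (((T.tendsto_Minf_zero_iff f).1 hf.2).comp hphi)⟩

theorem memTinf0_ite_level_lt (A : ℕ) :
    T.memTinf0 fun v => if T.level v < A then 1 else 0 := by
  have hnorm : ∀ v, ‖(if T.level v < A then 1 else 0 : ℂ)‖ = if T.level v < A then 1 else 0 :=
    fun v => by split_ifs <;> simp
  refine ⟨⟨1, ?_⟩, (T.tendsto_Minf_zero_iff _).2 ?_⟩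
  · rintro x ⟨n, rfl⟩
    exact T.Minf_le zero_le_one fun v _ => by rw [hnorm]; split_ifs <;> norm_num
  · refine tendsto_const_nhds.congr' ?_
    filter_upwards [tendsto_comap.eventually (eventually_ge_atTop A)] with v hv
    simp [Nat.not_lt.2 hv]

theorem tendsto_comap_level_of_memTinf0_comp {phi : T.V → T.V}
    (h : ∀ f : T.V → ℂ, T.memTinf0 f → T.memTinf0 (f ∘ phi)) :
    Tendsto phi (comap T.level atTop) (comap T.level atTop) := by
  refine tendsto_comap_iff.2 (tendsto_atTop.2 fun A => ?_)
  have hcomp := (T.tendsto_Minf_zero_iff _).1 (h _ (T.memTinf0_ite_level_lt A)).2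
  filter_upwards [hcomp.eventually (gt_mem_nhds one_pos)] with v hv
  by_contra hle
  have hlt : T.level (phi v) < A := not_le.1 hle
  simp [hlt] at hv

end HomTree

theorem bounded_comp_Tinf0_iff_general (q : ℕ) (T : HomTree q) (phi : T.V → T.V) :
    T.BoundedCompTinf0 phi ↔
      (∀ A : ℕ, ∃ N : ℕ, ∀ v : T.V, N ≤ T.level v → A ≤ T.level (phi v)) := by
  rw [← T.tendsto_comap_level_iff]
  refine ⟨fun h => T.tendsto_comap_level_of_memTinf0_comp h.1, fun hphi => ?_⟩
  refine ⟨fun f => T.memTinf0_comp hphi, 1, fun f hf => ?_⟩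
  rw [one_mul]
  exact ciSup_le (T.Minf_comp_le_normTinf phi hf.1)

/-- `C_φ` is bounded on `T_{∞,0}` iff `|φ v| → ∞` as `|v| → ∞`. -/
theorem bounded_comp_Tinf0_iff (q : ℕ) (hq : 1 ≤ q) (T : HomTree q) (phi : T.V → T.V) :
    T.BoundedCompTinf0 phi ↔
      (∀ A : ℕ, ∃ N : ℕ, ∀ v : T.V, N ≤ T.level v → A ≤ T.level (phi v)) :=
  bounded_comp_Tinf0_iff_general q T phi
end
end

section
/- Let T be the (q+1)-homogeneous rooted tree, q ≥ 1, let 1 ≤ p ≤ ∞ and let φ be a self-map of T such that C_φ is a bounded operator on T_p. Then C_φ is invertible on T_p if and only if φ is a bijection of T and C_{φ⁻¹} is a bounded operator on T_p; moreover, in that case the inverse operator is C_φ⁻¹ = C_{φ⁻¹}. -/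
open scoped BigOperators Classical

noncomputable section

open scoped ENNReal

namespace HomTree

variable {q : ℕ} (T : HomTree q)

/-- `f ∈ T_p` for an extended exponent `1 ≤ p ≤ ∞`. -/
def memTpE (p : ℝ≥0∞) (f : T.V → ℂ) : Prop :=
  if p = ⊤ then T.memTinf f else T.memTp p.toReal f

/-- `‖f‖_p` for an extended exponent `1 ≤ p ≤ ∞`. -/
def normTpE (p : ℝ≥0∞) (f : T.V → ℂ) : ℝ :=
  if p = ⊤ then T.normTinf f else T.normTp p.toReal f

/-- `C_φ` is a bounded operator on `T_p`, `1 ≤ p ≤ ∞`. -/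
def BoundedCompTpE (p : ℝ≥0∞) (phi : T.V → T.V) : Prop :=
  (∀ f : T.V → ℂ, T.memTpE p f → T.memTpE p (f ∘ phi)) ∧
  ∃ C : ℝ, ∀ f : T.V → ℂ, T.memTpE p f → T.normTpE p (f ∘ phi) ≤ C * T.normTpE p f

/-- `C_φ` is an invertible bounded operator on `T_p`: there is a bounded linear
operator `B` on `T_p` with `B ∘ C_φ = C_φ ∘ B = id` on `T_p`. -/
def InvertibleCompTpE (p : ℝ≥0∞) (phi : T.V → T.V) : Prop :=
  T.BoundedCompTpE p phi ∧
  ∃ B : (T.V → ℂ) → (T.V → ℂ),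
    (∀ f g : T.V → ℂ, T.memTpE p f → T.memTpE p g → B (f + g) = B f + B g) ∧
    (∀ (c : ℂ) (f : T.V → ℂ), T.memTpE p f → B (c • f) = c • B f) ∧
    (∀ f : T.V → ℂ, T.memTpE p f → T.memTpE p (B f)) ∧
    (∃ C : ℝ, ∀ f : T.V → ℂ, T.memTpE p f → T.normTpE p (B f) ≤ C * T.normTpE p f) ∧
    (∀ f : T.V → ℂ, T.memTpE p f → B (f ∘ phi) = f) ∧
    (∀ f : T.V → ℂ, T.memTpE p f → (B f) ∘ phi = f)

end HomTree

/-!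
Test an inverse `B` of `C_φ` against the point masses `δ_w`, which lie in every `T_p`.
From `C_φ B = I`, `(B δ_a) ∘ φ = δ_a` separates `a` from every other point of its fibre, so
`φ` is injective; from `B C_φ = I`, a point `w` outside the range of `φ` would give
`δ_w = B (δ_w ∘ φ) = B 0 = 0`, so `φ` is surjective. Then `B f = (B f ∘ φ) ∘ ψ = f ∘ ψ`,
so `B` is `C_ψ` and inherits its boundedness.
-/

namespace HomTree

variable {q : ℕ} (T : HomTree q)

theorem memTinf_of_norm_le {f : T.V → ℂ} {M : ℝ} (hM : 0 ≤ M) (hf : ∀ v, ‖f v‖ ≤ M) :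
    T.memTinf f := by
  refine ⟨M, ?_⟩
  rintro _ ⟨n, rfl⟩
  exact Real.sSup_le (by rintro _ ⟨v, -, rfl⟩; exact hf v) hM

theorem Mp_le_of_norm_le {p : ℝ} (hp : 0 ≤ p) {f : T.V → ℂ} {M : ℝ} (hM : 0 ≤ M)
    (hf : ∀ v, ‖f v‖ ≤ M) (n : ℕ) : T.Mp p n f ≤ (M ^ p) ^ (1 / p) := by
  have hsum : ∑ v ∈ T.levelFinset n, ‖f v‖ ^ p ≤ treeC q n * M ^ p :=
    calc ∑ v ∈ T.levelFinset n, ‖f v‖ ^ p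
        ≤ ∑ _v ∈ T.levelFinset n, M ^ p :=
          Finset.sum_le_sum fun v _ => Real.rpow_le_rpow (norm_nonneg _) (hf v) hp
      _ = treeC q n * M ^ p := by
          rw [Finset.sum_const, nsmul_eq_mul, levelFinset, T.card_level]
  unfold Mp
  gcongr
  rcases (Nat.cast_nonneg (α := ℝ) (treeC q n)).eq_or_lt with hc | hc
  · rw [← hc, div_zero, zero_mul]
    positivity
  · rwa [one_div, inv_mul_le_iff₀ hc]

theorem memTp_of_norm_le {p : ℝ} (hp : 0 ≤ p) {f : T.V → ℂ} {M : ℝ} (hM : 0 ≤ M)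
    (hf : ∀ v, ‖f v‖ ≤ M) : T.memTp p f :=
  ⟨_, by rintro _ ⟨n, rfl⟩; exact T.Mp_le_of_norm_le hp hM hf n⟩

theorem memTpE_of_norm_le (p : ℝ≥0∞) {f : T.V → ℂ} {M : ℝ} (hM : 0 ≤ M)
    (hf : ∀ v, ‖f v‖ ≤ M) : T.memTpE p f := by
  unfold memTpE
  split_ifs
  · exact T.memTinf_of_norm_le hM hf
  · exact T.memTp_of_norm_le ENNReal.toReal_nonneg hM hf

theorem memTpE_zero (p : ℝ≥0∞) : T.memTpE p 0 :=
  T.memTpE_of_norm_le p le_rfl fun _ => by simp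

theorem memTpE_single (p : ℝ≥0∞) (w : T.V) : T.memTpE p (Pi.single w 1) :=
  T.memTpE_of_norm_le p zero_le_one fun v => by
    rcases eq_or_ne v w with rfl | h <;> simp [*]

namespace InvertibleCompTpE

variable {T} {p : ℝ≥0∞} {phi : T.V → T.V}

theorem injective (h : T.InvertibleCompTpE p phi) : Function.Injective phi := by
  obtain ⟨-, B, -, -, -, -, -, hCB⟩ := h
  intro a b hab
  by_contra hne
  have hδ := congrFun (hCB _ (T.memTpE_single p a))
  have h1 := hδ a
  rw [Function.comp_apply, hab, ← Function.comp_apply (f := B _), hδ b,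
    Pi.single_eq_same, Pi.single_eq_of_ne (Ne.symm hne)] at h1
  exact zero_ne_one h1

theorem surjective (h : T.InvertibleCompTpE p phi) : Function.Surjective phi := by
  obtain ⟨-, B, hadd, -, -, -, hBC, -⟩ := h
  by_contra hsurj
  obtain ⟨w, hw⟩ := not_forall.mp hsurj
  have hB0 : B 0 = 0 := by
    simpa using hadd 0 0 (T.memTpE_zero p) (T.memTpE_zero p)
  have hδ : (Pi.single w 1 : T.V → ℂ) ∘ phi = 0 :=
    funext fun v => Pi.single_eq_of_ne (fun hv => hw ⟨v, hv⟩) _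
  have h1 := congrFun (hBC _ (T.memTpE_single p w)) w
  rw [hδ, hB0, Pi.single_eq_same] at h1
  exact zero_ne_one h1

theorem bijective (h : T.InvertibleCompTpE p phi) : Function.Bijective phi :=
  ⟨h.injective, h.surjective⟩

theorem boundedCompTpE_of_rightInverse (h : T.InvertibleCompTpE p phi) {psi : T.V → T.V}
    (hr : Function.RightInverse psi phi) : T.BoundedCompTpE p psi := by
  obtain ⟨-, B, -, -, hmem, ⟨C, hC⟩, -, hCB⟩ := h
  have hB : ∀ f, T.memTpE p f → f ∘ psi = B f := fun f hf => by
    calc f ∘ psi = (B f ∘ phi) ∘ psi := by rw [hCB f hf]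
      _ = B f := by rw [Function.comp_assoc, hr.comp_eq_id, Function.comp_id]
  exact ⟨fun f hf => hB f hf ▸ hmem f hf, C, fun f hf => hB f hf ▸ hC f hf⟩

end InvertibleCompTpE

theorem invertibleCompTpE_of_inverse {p : ℝ≥0∞} {phi psi : T.V → T.V}
    (hphi : T.BoundedCompTpE p phi) (hpsi : T.BoundedCompTpE p psi)
    (hl : Function.LeftInverse psi phi) (hr : Function.RightInverse psi phi) :
    T.InvertibleCompTpE p phi := by
  obtain ⟨hmem, C, hC⟩ := hpsi
  refine ⟨hphi, (· ∘ psi), fun _ _ _ _ => rfl, fun _ _ _ => rfl, hmem, ⟨C, hC⟩,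
    fun f _ => ?_, fun f _ => ?_⟩
  · show (f ∘ phi) ∘ psi = f
    rw [Function.comp_assoc, hr.comp_eq_id, Function.comp_id]
  · rw [Function.comp_assoc, hl.comp_eq_id, Function.comp_id]

end HomTree

theorem invertible_comp_iff_general (q : ℕ) (T : HomTree q)
    (p : ℝ≥0∞) (phi : T.V → T.V) (hb : T.BoundedCompTpE p phi) :
    (T.InvertibleCompTpE p phi ↔
      (Function.Bijective phi ∧
        ∃ psi : T.V → T.V, Function.LeftInverse psi phi ∧ Function.RightInverse psi phi ∧
          T.BoundedCompTpE p psi)) ∧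
    (T.InvertibleCompTpE p phi →
      ∀ psi : T.V → T.V, Function.LeftInverse psi phi → Function.RightInverse psi phi →
        T.BoundedCompTpE p psi ∧
        (∀ f : T.V → ℂ, T.memTpE p f → (f ∘ phi) ∘ psi = f ∧ (f ∘ psi) ∘ phi = f)) := by
  refine ⟨⟨fun h => ?_, ?_⟩, fun h psi hl hr => ⟨h.boundedCompTpE_of_rightInverse hr, ?_⟩⟩
  · obtain ⟨psi, hl, hr⟩ := Function.bijective_iff_has_inverse.mp h.bijective
    exact ⟨h.bijective, psi, hl, hr, h.boundedCompTpE_of_rightInverse hr⟩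
  · rintro ⟨-, psi, hl, hr, hpsi⟩
    exact T.invertibleCompTpE_of_inverse hb hpsi hl hr
  · intro f _
    simp only [Function.comp_assoc, hr.comp_eq_id, hl.comp_eq_id, Function.comp_id, and_self]

/-- For `1 ≤ p ≤ ∞` and `C_φ` bounded on `T_p`: `C_φ` is invertible iff `φ` is a
bijection whose inverse `ψ` induces a bounded `C_ψ`; moreover the inverse operator is
then `C_ψ = C_{φ⁻¹}`. -/
theorem invertible_comp_iff (q : ℕ) (hq : 1 ≤ q) (T : HomTree q)
    (p : ℝ≥0∞) (hp : 1 ≤ p) (phi : T.V → T.V) (hb : T.BoundedCompTpE p phi) :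
    (T.InvertibleCompTpE p phi ↔
      (Function.Bijective phi ∧
        ∃ psi : T.V → T.V, Function.LeftInverse psi phi ∧ Function.RightInverse psi phi ∧
          T.BoundedCompTpE p psi)) ∧
    (T.InvertibleCompTpE p phi →
      ∀ psi : T.V → T.V, Function.LeftInverse psi phi → Function.RightInverse psi phi →
        T.BoundedCompTpE p psi ∧
        (∀ f : T.V → ℂ, T.memTpE p f → (f ∘ phi) ∘ psi = f ∧ (f ∘ psi) ∘ phi = f)) :=
  invertible_comp_iff_general q T p phi hb
end
end
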